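/- Let n ≥ 1 and m ≥ 1, and for j ∈ {1, …, m} let C_j be a set of exactly three elements of {1, …, n} (a clause over variables x_1, …, x_n). Define the graph G with vertex set {v_1, …, v_n} ∪ {v_1', …, v_n'} ∪ {c_1, …, c_m} ∪ {c_1', …, c_m'} (all 2n + 2m vertices distinct) and edges: all pairs v_i v_{i''} for i ≠ i'' (so {v_1,…,v_n} is a clique), all pairs v_i' v_{i''}' for i ≠ i'' (so {v_1',…,v_n'} is a clique), the edges v_i v_i' for all i, the edges v_i c_j exactly when i ∈ C_j, and the edges v_i' c_j' exactly when i ∈ C_j; there are no other edges. Then there exists a truth assignment τ : {1, …, n} → {true, false} such that every clause C_j contains a variable set to true and a variable set to false if and only if G has two disjoint, anticomplete vertex sets S_1 and S_2 with {c_1, …, c_m} ⊆ S_1, {c_1', …, c_m'} ⊆ S_2, and both G[S_1] and G[S_2] connected. -/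
import Mathlib


/-- The graph built from an instance of Not-All-Equal-3-Sat with `n` variables and `m`
clauses: vertices `v_i` (`Sum.inl (Sum.inl i)`), their copies `v_i'`
(`Sum.inl (Sum.inr i)`), clause vertices `c_j` (`Sum.inr (Sum.inl j)`) and their copies
`c_j'` (`Sum.inr (Sum.inr j)`).  Both `{v_i}` and `{v_i'}` are cliques, `v_i v_i'` is an
edge for every `i`, `v_i c_j` is an edge iff `i ∈ C j`, and `v_i' c_j'` is an edge iff
`i ∈ C j`; there are no other edges. -/
def naeGadget (n m : ℕ) (C : Fin m → Finset (Fin n)) :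
    SimpleGraph ((Fin n ⊕ Fin n) ⊕ (Fin m ⊕ Fin m)) :=
  SimpleGraph.fromRel fun x y => match x, y with
    | Sum.inl (Sum.inl _), Sum.inl (Sum.inl _) => True
    | Sum.inl (Sum.inr _), Sum.inl (Sum.inr _) => True
    | Sum.inl (Sum.inl i), Sum.inl (Sum.inr i') => i = i'
    | Sum.inl (Sum.inl i), Sum.inr (Sum.inl j) => i ∈ C j
    | Sum.inl (Sum.inr i), Sum.inr (Sum.inr j) => i ∈ C j
    | _, _ => False

namespace NaeAux

open Sum

variable {n m : ℕ} {C : Fin m → Finset (Fin n)}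

lemma adj_vv {i i' : Fin n} (h : i ≠ i') :
    (naeGadget n m C).Adj (inl (inl i)) (inl (inl i')) := by
  simp [naeGadget, h]

lemma adj_v'v' {i i' : Fin n} (h : i ≠ i') :
    (naeGadget n m C).Adj (inl (inr i)) (inl (inr i')) := by
  simp [naeGadget, h]

lemma adj_vv' (i : Fin n) :
    (naeGadget n m C).Adj (inl (inl i)) (inl (inr i)) := by
  simp [naeGadget]

lemma adj_vc {i : Fin n} {j : Fin m} (h : i ∈ C j) :
    (naeGadget n m C).Adj (inl (inl i)) (inr (inl j)) := by
  simp [naeGadget, h]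

lemma adj_v'c' {i : Fin n} {j : Fin m} (h : i ∈ C j) :
    (naeGadget n m C).Adj (inl (inr i)) (inr (inr j)) := by
  simp [naeGadget, h]

lemma neighbor_c {j : Fin m} {x} (h : (naeGadget n m C).Adj (inr (inl j)) x) :
    ∃ i ∈ C j, x = inl (inl i) := by
  rcases x with (i | i) | (j' | j')
  · exact ⟨i, by simpa [naeGadget] using h, rfl⟩
  all_goals simp [naeGadget] at h

lemma neighbor_c' {j : Fin m} {x} (h : (naeGadget n m C).Adj (inr (inr j)) x) :
    ∃ i ∈ C j, x = inl (inr i) := by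
  rcases x with (i | i) | (j' | j')
  · simp [naeGadget] at h
  · exact ⟨i, by simpa [naeGadget] using h, rfl⟩
  all_goals simp [naeGadget] at h

lemma nadj_vv' {i i' : Fin n} (h : i ≠ i') :
    ¬ (naeGadget n m C).Adj (inl (inl i)) (inl (inr i')) := by
  simp [naeGadget, h]

lemma nadj_vc' {i : Fin n} {j : Fin m} :
    ¬ (naeGadget n m C).Adj (inl (inl i)) (inr (inr j)) := by
  simp [naeGadget]

lemma nadj_cv' {i : Fin n} {j : Fin m} :
    ¬ (naeGadget n m C).Adj (inr (inl j)) (inl (inr i)) := by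
  simp [naeGadget]

lemma nadj_cc' {j j' : Fin m} :
    ¬ (naeGadget n m C).Adj (inr (inl j)) (inr (inr j')) := by
  simp [naeGadget]

lemma exists_neighbor {V : Type*} {G : SimpleGraph V} {S : Set V}
    (hc : (G.induce S).Connected) {a b : V} (ha : a ∈ S) (hb : b ∈ S) (hab : a ≠ b) :
    ∃ x ∈ S, G.Adj a x := by
  obtain ⟨p⟩ := hc ⟨a, ha⟩ ⟨b, hb⟩
  cases p with
  | nil => exact absurd rfl hab
  | cons h _ =>
    rename_i w _
    exact ⟨w.1, w.2, h⟩

lemma reach_of_adj {V : Type*} {G : SimpleGraph V} {S : Set V} {a b : V}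
    (ha : a ∈ S) (hb : b ∈ S) (h : G.Adj a b) :
    (G.induce S).Reachable ⟨a, ha⟩ ⟨b, hb⟩ :=
  SimpleGraph.Adj.reachable h

end NaeAux

open Sum NaeAux in
/-- the NAE-3-Sat instance is satisfiable (every clause gets a true and a
false variable) iff the gadget graph has two disjoint anticomplete connected sets `S₁`
and `S₂` with `S₁` containing all the `c_j` and `S₂` containing all the `c_j'`. -/
theorem nae3sat_iff_gadget (n m : ℕ) (hn : 1 ≤ n) (hm : 1 ≤ m)
    (C : Fin m → Finset (Fin n)) (hC : ∀ j, (C j).card = 3) :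
    (∃ τ : Fin n → Bool, ∀ j : Fin m,
        (∃ i ∈ C j, τ i = true) ∧ (∃ i ∈ C j, τ i = false)) ↔
    (∃ S₁ S₂ : Set ((Fin n ⊕ Fin n) ⊕ (Fin m ⊕ Fin m)),
        Disjoint S₁ S₂ ∧
        (∀ a ∈ S₁, ∀ b ∈ S₂, ¬ (naeGadget n m C).Adj a b) ∧
        (∀ j : Fin m, Sum.inr (Sum.inl j) ∈ S₁) ∧
        (∀ j : Fin m, Sum.inr (Sum.inr j) ∈ S₂) ∧
        ((naeGadget n m C).induce S₁).Connected ∧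
        ((naeGadget n m C).induce S₂).Connected) := by
  classical
  constructor
  · rintro ⟨τ, hτ⟩
    set G := naeGadget n m C with hG
    set T₁ : Set ((Fin n ⊕ Fin n) ⊕ (Fin m ⊕ Fin m)) := {x | match x with
        | inl (inl i) => τ i = true
        | inr (inl _) => True
        | _ => False} with hT₁
    set T₂ : Set ((Fin n ⊕ Fin n) ⊕ (Fin m ⊕ Fin m)) := {x | match x with
        | inl (inr i) => τ i = false
        | inr (inr _) => True
        | _ => False} with hT₂
    have mem_v₁ : ∀ {i : Fin n}, τ i = true → inl (inl i) ∈ T₁ := fun h => h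
    have mem_v₂ : ∀ {i : Fin n}, τ i = false → inl (inr i) ∈ T₂ := fun h => h
    have mem_c₁ : ∀ j : Fin m, inr (inl j) ∈ T₁ := fun _ => trivial
    have mem_c₂ : ∀ j : Fin m, inr (inr j) ∈ T₂ := fun _ => trivial
    have v₁_of_mem : ∀ {i : Fin n}, inl (inl i) ∈ T₁ → τ i = true := fun h => h
    have v₂_of_mem : ∀ {i : Fin n}, inl (inr i) ∈ T₂ → τ i = false := fun h => h
    refine ⟨T₁, T₂, ?_, ?_, mem_c₁, mem_c₂, ?_, ?_⟩
    · rw [Set.disjoint_left]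
      rintro ((i | i) | (j | j)) hx hy
      · exact (hy : False)
      · exact (hx : False)
      · exact (hy : False)
      · exact (hx : False)
    · rintro ((i | i) | (j | j)) ha ((i' | i') | (j' | j')) hb <;>
        first
        | exact (ha : False).elim | exact (hb : False).elim
        | skip
      · have ha' : τ i = true := v₁_of_mem ha
        have hb' : τ i' = false := v₂_of_mem hb
        exact nadj_vv' fun e => by subst e; rw [ha'] at hb'; exact Bool.noConfusion hb'
      · exact nadj_vc'
      · exact nadj_cv'
      · exact nadj_cc'
    · -- S₁ connected
      obtain ⟨i₀, hi₀C, hi₀⟩ := (hτ ⟨0, hm⟩).1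
      have hhub : inl (inl i₀) ∈ T₁ := mem_v₁ hi₀
      have reach : ∀ a, ∀ ha : a ∈ T₁,
          (G.induce T₁).Reachable ⟨a, ha⟩ ⟨_, hhub⟩ := by
        rintro ((i | i) | (j | j)) ha
        · by_cases hii : i = i₀
          · subst hii; rfl
          · exact reach_of_adj ha hhub (adj_vv hii)
        · exact (ha : False).elim
        · obtain ⟨i, hiC, hit⟩ := (hτ j).1
          have hmi : inl (inl i) ∈ T₁ := mem_v₁ hit
          refine (reach_of_adj ha hmi (adj_vc hiC).symm).trans ?_
          by_cases hii : i = i₀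
          · subst hii; rfl
          · exact reach_of_adj hmi hhub (adj_vv hii)
        · exact (ha : False).elim
      rw [SimpleGraph.connected_iff]
      exact ⟨fun a b => (reach a.1 a.2).trans (reach b.1 b.2).symm, ⟨⟨_, hhub⟩⟩⟩
    · -- S₂ connected
      obtain ⟨i₀, hi₀C, hi₀⟩ := (hτ ⟨0, hm⟩).2
      have hhub : inl (inr i₀) ∈ T₂ := mem_v₂ hi₀
      have reach : ∀ a, ∀ ha : a ∈ T₂,
          (G.induce T₂).Reachable ⟨a, ha⟩ ⟨_, hhub⟩ := by
        rintro ((i | i) | (j | j)) ha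
        · exact (ha : False).elim
        · by_cases hii : i = i₀
          · subst hii; rfl
          · exact reach_of_adj ha hhub (adj_v'v' hii)
        · exact (ha : False).elim
        · obtain ⟨i, hiC, hit⟩ := (hτ j).2
          have hmi : inl (inr i) ∈ T₂ := mem_v₂ hit
          refine (reach_of_adj ha hmi (adj_v'c' hiC).symm).trans ?_
          by_cases hii : i = i₀
          · subst hii; rfl
          · exact reach_of_adj hmi hhub (adj_v'v' hii)
      rw [SimpleGraph.connected_iff]
      exact ⟨fun a b => (reach a.1 a.2).trans (reach b.1 b.2).symm, ⟨⟨_, hhub⟩⟩⟩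
  · rintro ⟨S₁, S₂, hdisj, hanti, hcS₁, hc'S₂, hS₁conn, hS₂conn⟩
    by_cases hm2 : 2 ≤ m
    · have : Nontrivial (Fin m) := by
        rw [Fin.nontrivial_iff_two_le]; exact hm2
      refine ⟨fun i => if inl (inl i) ∈ S₁ then true else false, fun j => ?_⟩
      obtain ⟨j', hj'⟩ := exists_ne j
      constructor
      · obtain ⟨x, hxS, hadj⟩ := exists_neighbor hS₁conn (hcS₁ j) (hcS₁ j')
          (by simpa using hj'.symm)
        obtain ⟨i, hiC, rfl⟩ := neighbor_c hadj
        exact ⟨i, hiC, if_pos hxS⟩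
      · obtain ⟨x, hxS, hadj⟩ := exists_neighbor hS₂conn (hc'S₂ j) (hc'S₂ j')
          (by simpa using hj'.symm)
        obtain ⟨i, hiC, rfl⟩ := neighbor_c' hadj
        refine ⟨i, hiC, if_neg fun hmem => ?_⟩
        exact hanti _ hmem _ hxS (adj_vv' i)
    · have hm1 : m = 1 := by omega
      subst hm1
      have hcard : 1 < (C 0).card := by rw [hC 0]; omega
      obtain ⟨a, ha⟩ := Finset.card_pos.mp (by omega : 0 < (C 0).card)
      obtain ⟨b, hb, hba⟩ := Finset.exists_mem_ne hcard a
      refine ⟨fun i => decide (i = a), fun j => ?_⟩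
      have hj : j = 0 := Subsingleton.elim j 0
      subst hj
      exact ⟨⟨a, ha, by simp⟩, ⟨b, hb, by simp [hba]⟩⟩
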